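/- Let U ⊆ ℂ^m be open, let h be a hermitian metric on the trivial bundle F = U×ℂ^N with Chern connection D_j and curvature Θ_{jk}, and let W ⊆ ℂ^N be a complex linear subspace (defining the subbundle E = U×W with the induced metric). For t ∈ U let π(t) : ℂ^N → ℂ^N be the orthogonal projection onto W with respect to the inner product ⟨x,y⟩_{h(t)} = ⟪h(t)x, y⟫, and set π_⊥(t) = I − π(t). For smooth u : U → W define D^E_j u = π·(D_j u) and Θ^E_{jk} u = D^E_j(∂̄_k u) − ∂̄_k(D^E_j u). Then for all smooth maps u, v : U → W and all 1 ≤ j,k ≤ m, the identity ⟪h·Θ_{jk}·u, v⟫ = ⟪h·π_⊥(D_j u), π_⊥(D_k v)⟫ + ⟪h·Θ^E_{jk} u, v⟫ holds at every point of U. (Griffiths' formula (2.4) relating the curvature of a hermitian holomorphic subbundle to the curvature of the ambient bundle and the second fundamental form, Section 2.) -/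

import Mathlib

open Complex Matrix
open scoped ComplexOrder

noncomputable section

/-- The Wirtinger derivative `∂_w f (x)` in the direction `w`,
defined via the real Fréchet derivative. -/
def wD {E : Type*} [NormedAddCommGroup E] [NormedSpace ℂ E] (f : E → ℂ) (x w : E) : ℂ :=
  (fderiv ℝ f x w - Complex.I * fderiv ℝ f x (Complex.I • w)) / 2

/-- The Wirtinger derivative `∂̄_w f (x)` in the direction `w`. -/
def wDbar {E : Type*} [NormedAddCommGroup E] [NormedSpace ℂ E] (f : E → ℂ) (x w : E) : ℂ :=
  (fderiv ℝ f x w + Complex.I * fderiv ℝ f x (Complex.I • w)) / 2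

/-- The standard inner product `⟪x,y⟫ = Σ_i x_i·conj(y_i)` on `ℂ^N`. -/
def sip {N : ℕ} (x y : Fin N → ℂ) : ℂ := ∑ i, x i * (starRingEnd ℂ) (y i)

/-- Entrywise Wirtinger `∂_j` of a matrix-valued function. -/
def mD {m N : ℕ} (f : (Fin m → ℂ) → Matrix (Fin N) (Fin N) ℂ) (x : Fin m → ℂ) (j : Fin m) :
    Matrix (Fin N) (Fin N) ℂ :=
  Matrix.of fun a b => wD (fun s => f s a b) x (Pi.single j 1)

/-- Entrywise Wirtinger `∂̄_k` of a matrix-valued function. -/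
def mDbar {m N : ℕ} (f : (Fin m → ℂ) → Matrix (Fin N) (Fin N) ℂ) (x : Fin m → ℂ) (k : Fin m) :
    Matrix (Fin N) (Fin N) ℂ :=
  Matrix.of fun a b => wDbar (fun s => f s a b) x (Pi.single k 1)

/-- Entrywise Wirtinger `∂_j` of a vector-valued function. -/
def vD {m N : ℕ} (f : (Fin m → ℂ) → (Fin N → ℂ)) (x : Fin m → ℂ) (j : Fin m) : Fin N → ℂ :=
  fun a => wD (fun s => f s a) x (Pi.single j 1)

/-- Entrywise Wirtinger `∂̄_k` of a vector-valued function. -/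
def vDbar {m N : ℕ} (f : (Fin m → ℂ) → (Fin N → ℂ)) (x : Fin m → ℂ) (k : Fin m) : Fin N → ℂ :=
  fun a => wDbar (fun s => f s a) x (Pi.single k 1)

/-- The Chern connection `D_j u = ∂_j u + h⁻¹(∂_j h)·u` of the hermitian metric `h`. -/
def chern {m N : ℕ} (h : (Fin m → ℂ) → Matrix (Fin N) (Fin N) ℂ)
    (u : (Fin m → ℂ) → (Fin N → ℂ)) (j : Fin m) (t : Fin m → ℂ) : Fin N → ℂ :=
  vD u t j + ((h t)⁻¹ * mD h t j) *ᵥ u t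

/-- The curvature `Θ_{jk} = −∂̄_k(h⁻¹·∂_j h)` of the hermitian metric `h`. -/
def curv {m N : ℕ} (h : (Fin m → ℂ) → Matrix (Fin N) (Fin N) ℂ)
    (j k : Fin m) (t : Fin m → ℂ) : Matrix (Fin N) (Fin N) ℂ :=
  - mDbar (fun s => (h s)⁻¹ * mD h s j) t k

/-!
Since `D_j` is `∂_j` plus a term of order zero and `∂_j`, `∂̄_k` commute on smooth functions,
`Θ_{jk} u = D_j ∂̄_k u - ∂̄_k D_j u`. Write `A = π_⊥ D_j u`. As `v` takes values in `W`,
`⟪h A, v⟫` vanishes identically; applying `∂̄_k` and using that the Chern connection is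
compatible with `h` gives `⟪h A, D_k v⟫ = -⟪h ∂̄_k A, v⟫`, which is the second fundamental form
term. The rest is bookkeeping: pairing with `v` (or with `π_⊥ D_k v`) absorbs the projections.
Differentiating `A` requires `π` to be smooth, which holds because
`π(t) = B (Bᴴ h(t) B)⁻¹ Bᴴ h(t)` for any matrix `B` whose columns form a basis of `W`.
-/

open Filter Topology
open scoped ContDiff ComplexConjugate

section Wirtinger

variable {E : Type*} [NormedAddCommGroup E] [NormedSpace ℂ E] {f g : E → ℂ} {x w : E}

theorem Filter.EventuallyEq.wDbar_eq (h : f =ᶠ[𝓝 x] g) : wDbar f x w = wDbar g x w := by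
  rw [wDbar, wDbar, h.fderiv_eq]

theorem wDbar_const (c : ℂ) : wDbar (fun _ => c) x w = 0 := by
  simp [wDbar]

theorem wDbar_add (hf : DifferentiableAt ℝ f x) (hg : DifferentiableAt ℝ g x) :
    wDbar (fun s => f s + g s) x w = wDbar f x w + wDbar g x w := by
  simp only [wDbar, fderiv_fun_add hf hg, _root_.add_apply]; ring

theorem wDbar_sub (hf : DifferentiableAt ℝ f x) (hg : DifferentiableAt ℝ g x) :
    wDbar (fun s => f s - g s) x w = wDbar f x w - wDbar g x w := by
  simp only [wDbar, fderiv_fun_sub hf hg, _root_.sub_apply]; ring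

theorem wDbar_mul (hf : DifferentiableAt ℝ f x) (hg : DifferentiableAt ℝ g x) :
    wDbar (fun s => f s * g s) x w = wDbar f x w * g x + f x * wDbar g x w := by
  simp only [wDbar, fderiv_fun_mul hf hg, _root_.add_apply,
    _root_.smul_apply, smul_eq_mul]; ring

theorem wDbar_sum {ι : Type*} (s : Finset ι) {F : ι → E → ℂ}
    (hF : ∀ i ∈ s, DifferentiableAt ℝ (F i) x) :
    wDbar (fun y => ∑ i ∈ s, F i y) x w = ∑ i ∈ s, wDbar (F i) x w := by
  simp only [wDbar, fderiv_fun_sum hF, FunLike.coe_sum, Finset.sum_apply,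
    Finset.mul_sum, ← Finset.sum_add_distrib, ← Finset.sum_div]

theorem wDbar_conj : wDbar (fun s => conj (f s)) x w = conj (wD f x w) := by
  rw [wDbar, wD, show (fun s => conj (f s)) = conjCLE ∘ f from rfl, conjCLE.comp_fderiv]
  simp only [ContinuousLinearMap.comp_apply, ContinuousLinearEquiv.coe_coe, conjCLE_apply,
    map_div₀, map_sub, map_mul, conj_I, conj_ofNat]
  ring

theorem hasFDerivAt_fderiv_apply (hf : DifferentiableAt ℝ (fderiv ℝ f) x) (a : E) :
    HasFDerivAt (fun s => fderiv ℝ f s a)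
      ((ContinuousLinearMap.apply ℝ ℂ a).comp (fderiv ℝ (fderiv ℝ f) x)) x :=
  (ContinuousLinearMap.apply ℝ ℂ a).hasFDerivAt.comp x hf.hasFDerivAt

theorem fderiv_wD_apply (hf : DifferentiableAt ℝ (fderiv ℝ f) x) (w v : E) :
    fderiv ℝ (fun s => wD f s w) x v =
      (fderiv ℝ (fderiv ℝ f) x v w - I * fderiv ℝ (fderiv ℝ f) x v (I • w)) / 2 := by
  have hL := hasFDerivAt_fderiv_apply hf
  have hD : HasFDerivAt (fun s => wD f s w) _ x :=
    ((hL w).sub ((hL (I • w)).const_mul I)).mul_const (2⁻¹ : ℂ)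
  rw [hD.fderiv]
  simp only [_root_.smul_apply, _root_.sub_apply, ContinuousLinearMap.comp_apply,
    ContinuousLinearMap.apply_apply, smul_eq_mul]
  ring

theorem fderiv_wDbar_apply (hf : DifferentiableAt ℝ (fderiv ℝ f) x) (w v : E) :
    fderiv ℝ (fun s => wDbar f s w) x v =
      (fderiv ℝ (fderiv ℝ f) x v w + I * fderiv ℝ (fderiv ℝ f) x v (I • w)) / 2 := by
  have hL := hasFDerivAt_fderiv_apply hf
  have hD : HasFDerivAt (fun s => wDbar f s w) _ x :=
    ((hL w).add ((hL (I • w)).const_mul I)).mul_const (2⁻¹ : ℂ)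
  rw [hD.fderiv]
  simp only [_root_.smul_apply, _root_.add_apply, ContinuousLinearMap.comp_apply,
    ContinuousLinearMap.apply_apply, smul_eq_mul]
  ring

theorem wDbar_wD_comm (hf : ContDiffAt ℝ 2 f x) (w₁ w₂ : E) :
    wDbar (fun s => wD f s w₁) x w₂ = wD (fun s => wDbar f s w₂) x w₁ := by
  have hsymm : IsSymmSndFDerivAt ℝ f x :=
    hf.isSymmSndFDerivAt (by simp [minSmoothness_of_isRCLikeNormedField])
  have hD : DifferentiableAt ℝ (fderiv ℝ f) x :=
    (hf.fderiv_right (m := 1) le_rfl).differentiableAt one_ne_zero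
  rw [wDbar, wD, fderiv_wD_apply hD, fderiv_wD_apply hD, fderiv_wDbar_apply hD,
    fderiv_wDbar_apply hD, hsymm w₂ w₁, hsymm w₂ (I • w₁), hsymm (I • w₂) w₁,
    hsymm (I • w₂) (I • w₁)]
  ring

theorem ContDiffAt.wD {n : WithTop ℕ∞} (hf : ContDiffAt ℝ (n + 1) f x) (w : E) :
    ContDiffAt ℝ n (fun s => wD f s w) x := by
  have hD := fun v => (ContinuousLinearMap.apply ℝ ℂ v).contDiff.contDiffAt.comp x
    (hf.fderiv_right (m := n) le_rfl)
  exact ((hD w).sub (contDiffAt_const.mul (hD (I • w)))).div_const 2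

end Wirtinger

section EntrywiseSmoothness

variable {E : Type*} [NormedAddCommGroup E] [NormedSpace ℝ E] {n : WithTop ℕ∞} {x : E}
  {p q r : Type*} [Fintype q]

theorem contDiffAt_mul_apply {A : E → Matrix p q ℂ} {B : E → Matrix q r ℂ}
    (hA : ∀ a b, ContDiffAt ℝ n (fun s => A s a b) x)
    (hB : ∀ a b, ContDiffAt ℝ n (fun s => B s a b) x) (a : p) (b : r) :
    ContDiffAt ℝ n (fun s => (A s * B s) a b) x := by
  simp only [mul_apply]
  exact ContDiffAt.sum fun c _ => (hA a c).mul (hB c b)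

theorem contDiffAt_mulVec_apply {A : E → Matrix p q ℂ} {v : E → q → ℂ}
    (hA : ∀ a b, ContDiffAt ℝ n (fun s => A s a b) x)
    (hv : ∀ b, ContDiffAt ℝ n (fun s => v s b) x) (a : p) :
    ContDiffAt ℝ n (fun s => (A s *ᵥ v s) a) x := by
  simp only [mulVec, dotProduct]
  exact ContDiffAt.sum fun c _ => (hA a c).mul (hv c)

theorem differentiableAt_mulVec_apply {A : E → Matrix p q ℂ} {v : E → q → ℂ}
    (hA : ∀ a b, DifferentiableAt ℝ (fun s => A s a b) x)
    (hv : ∀ b, DifferentiableAt ℝ (fun s => v s b) x) (a : p) :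
    DifferentiableAt ℝ (fun s => (A s *ᵥ v s) a) x := by
  simp only [mulVec, dotProduct]
  exact DifferentiableAt.fun_sum fun c _ => (hA a c).mul (hv c)

theorem contDiffAt_det [DecidableEq q] {A : E → Matrix q q ℂ}
    (hA : ∀ a b, ContDiffAt ℝ n (fun s => A s a b) x) :
    ContDiffAt ℝ n (fun s => (A s).det) x := by
  simp only [det_apply]
  exact ContDiffAt.sum fun σ _ => (contDiffAt_prod fun i _ => hA (σ i) i).const_smul _

theorem contDiffAt_inv_apply [DecidableEq q] {A : E → Matrix q q ℂ}
    (hA : ∀ a b, ContDiffAt ℝ n (fun s => A s a b) x) (hdet : IsUnit (A x).det) (a b : q) :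
    ContDiffAt ℝ n (fun s => (A s)⁻¹ a b) x := by
  have hadj : ContDiffAt ℝ n (fun s => (A s).adjugate a b) x := by
    simp only [adjugate_apply]
    refine contDiffAt_det fun c d => ?_
    by_cases hc : c = b
    · subst hc
      simpa using contDiffAt_const
    · simpa [updateRow_ne hc] using hA c d
  have hinv : ∀ s, (A s)⁻¹ a b = ((A s).det)⁻¹ * (A s).adjugate a b := fun s => by
    rw [Matrix.inv_def, Matrix.smul_apply, Ring.inverse_eq_inv', smul_eq_mul]
  simp only [hinv]
  exact ((contDiffAt_det hA).inv hdet.ne_zero).mul hadj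

end EntrywiseSmoothness

section StandardInnerProduct

variable {N : ℕ}

theorem sip_eq_dotProduct (x y : Fin N → ℂ) : sip x y = star y ⬝ᵥ x := by
  simp only [sip, dotProduct, Pi.star_apply, star_def, mul_comm]

theorem sip_add_left (x y z : Fin N → ℂ) : sip (x + y) z = sip x z + sip y z := by
  simp only [sip_eq_dotProduct, dotProduct_add]

theorem sip_sub_left (x y z : Fin N → ℂ) : sip (x - y) z = sip x z - sip y z := by
  simp only [sip_eq_dotProduct, dotProduct_sub]

theorem sip_add_right (x y z : Fin N → ℂ) : sip x (y + z) = sip x y + sip x z := by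
  simp only [sip_eq_dotProduct, star_add, add_dotProduct]

theorem sip_sub_right (x y z : Fin N → ℂ) : sip x (y - z) = sip x y - sip x z := by
  simp only [sip_eq_dotProduct, star_sub, sub_dotProduct]

theorem sip_mulVec_right {r : ℕ} (x : Fin N → ℂ) (M : Matrix (Fin N) (Fin r) ℂ)
    (y : Fin r → ℂ) : sip x (M *ᵥ y) = sip (Mᴴ *ᵥ x) y := by
  rw [sip_eq_dotProduct, sip_eq_dotProduct, star_mulVec, dotProduct_mulVec]

theorem sip_mulVec_inv_mul_mulVec {H : Matrix (Fin N) (Fin N) ℂ} (hH : H.IsHermitian)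
    (hdet : IsUnit H.det) (M : Matrix (Fin N) (Fin N) ℂ) (x y : Fin N → ℂ) :
    sip (H *ᵥ x) ((H⁻¹ * M) *ᵥ y) = sip (Mᴴ *ᵥ x) y := by
  rw [sip_mulVec_right, mulVec_mulVec, conjTranspose_mul, conjTranspose_nonsing_inv, hH.eq,
    Matrix.mul_assoc, nonsing_inv_mul _ hdet, Matrix.mul_one]

theorem conjTranspose_mulVec_eq_zero_of_sip {r : ℕ} {x : Fin N → ℂ}
    {B : Matrix (Fin N) (Fin r) ℂ} (h : ∀ c, sip x (B *ᵥ c) = 0) : Bᴴ *ᵥ x = 0 := by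
  have := h (Bᴴ *ᵥ x)
  rwa [sip_mulVec_right, sip_eq_dotProduct, dotProduct_star_self_eq_zero] at this

end StandardInnerProduct

section VectorWirtinger

variable {m N : ℕ} {t : Fin m → ℂ} {f g : (Fin m → ℂ) → Fin N → ℂ}

theorem vDbar_add (hf : ∀ a, DifferentiableAt ℝ (fun s => f s a) t)
    (hg : ∀ a, DifferentiableAt ℝ (fun s => g s a) t) (k : Fin m) :
    vDbar (fun s => f s + g s) t k = vDbar f t k + vDbar g t k :=
  funext fun a => wDbar_add (hf a) (hg a)

theorem vDbar_sub (hf : ∀ a, DifferentiableAt ℝ (fun s => f s a) t)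
    (hg : ∀ a, DifferentiableAt ℝ (fun s => g s a) t) (k : Fin m) :
    vDbar (fun s => f s - g s) t k = vDbar f t k - vDbar g t k :=
  funext fun a => wDbar_sub (hf a) (hg a)

theorem vDbar_mulVec {A : (Fin m → ℂ) → Matrix (Fin N) (Fin N) ℂ}
    (hA : ∀ a b, DifferentiableAt ℝ (fun s => A s a b) t)
    (hf : ∀ a, DifferentiableAt ℝ (fun s => f s a) t) (k : Fin m) :
    vDbar (fun s => A s *ᵥ f s) t k = mDbar A t k *ᵥ f t + A t *ᵥ vDbar f t k := by
  funext a
  simp only [vDbar, mDbar, mulVec, dotProduct, of_apply, Pi.add_apply]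
  rw [wDbar_sum (F := fun b s => A s a b * f s b) _ fun b _ => (hA a b).mul (hf b),
    ← Finset.sum_add_distrib]
  exact Finset.sum_congr rfl fun b _ => wDbar_mul (hA a b) (hf b)

theorem wDbar_sip (hf : ∀ a, DifferentiableAt ℝ (fun s => f s a) t)
    (hg : ∀ a, DifferentiableAt ℝ (fun s => g s a) t) (k : Fin m) :
    wDbar (fun s => sip (f s) (g s)) t (Pi.single k 1) =
      sip (vDbar f t k) (g t) + sip (f t) (vD g t k) := by
  simp only [sip, vDbar, vD]
  rw [wDbar_sum (F := fun a s => f s a * conj (g s a)) _ fun a _ => (hf a).mul (hg a).star,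
    ← Finset.sum_add_distrib]
  exact Finset.sum_congr rfl fun a _ => by
    rw [wDbar_mul (g := fun s => conj (g s a)) (hf a) (hg a).star, wDbar_conj]

theorem conjTranspose_mD {h : (Fin m → ℂ) → Matrix (Fin N) (Fin N) ℂ}
    (hh : ∀ᶠ s in 𝓝 t, (h s).IsHermitian) (k : Fin m) : (mD h t k)ᴴ = mDbar h t k := by
  ext a b
  have hba : (fun s => h s a b) =ᶠ[𝓝 t] fun s => conj (h s b a) :=
    hh.mono fun s hs => (hs.apply a b).symm
  simp only [conjTranspose_apply, mD, mDbar, of_apply, hba.wDbar_eq, wDbar_conj]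
  rfl

end VectorWirtinger

section OrthogonalProjection

variable {n r : Type*} [Fintype n] [Fintype r] [DecidableEq r]

/-- For `H` positive definite and `B` injective, the `H`-orthogonal projection onto the column
space of `B`: writing the projection of `x` as `B c`, orthogonality `Bᴴ H (x - B c) = 0`
forces `c = (Bᴴ H B)⁻¹ Bᴴ H x`. -/
def gramProj (B : Matrix n r ℂ) (H : Matrix n n ℂ) : Matrix n n ℂ :=
  B * (Bᴴ * H * B)⁻¹ * Bᴴ * H

theorem eq_gramProj_mulVec {B : Matrix n r ℂ} {H : Matrix n n ℂ}
    (hG : IsUnit (Bᴴ * H * B).det) {x : n → ℂ} {c : r → ℂ}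
    (horth : Bᴴ *ᵥ (H *ᵥ (x - B *ᵥ c)) = 0) : B *ᵥ c = gramProj B H *ᵥ x := by
  have hc : Bᴴ *ᵥ (H *ᵥ x) = (Bᴴ * H * B) *ᵥ c := by
    rw [mulVec_sub, mulVec_sub, sub_eq_zero] at horth
    rw [horth, mulVec_mulVec, mulVec_mulVec, Matrix.mul_assoc]
  rw [gramProj, ← mulVec_mulVec, ← mulVec_mulVec, ← mulVec_mulVec, hc, mulVec_mulVec c,
    nonsing_inv_mul _ hG, one_mulVec]

theorem contDiffAt_gramProj_apply {E : Type*} [NormedAddCommGroup E] [NormedSpace ℝ E]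
    {k : WithTop ℕ∞} {x : E} {B : Matrix n r ℂ} {H : E → Matrix n n ℂ}
    (hH : ∀ a b, ContDiffAt ℝ k (fun s => H s a b) x) (hG : IsUnit (Bᴴ * H x * B).det)
    (a b : n) : ContDiffAt ℝ k (fun s => gramProj B (H s) a b) x := by
  have hB : ∀ a b, ContDiffAt ℝ k (fun _ : E => B a b) x := fun _ _ => contDiffAt_const
  have hBH : ∀ a b, ContDiffAt ℝ k (fun _ : E => Bᴴ a b) x := fun _ _ => contDiffAt_const
  have hGinv := contDiffAt_inv_apply
    (contDiffAt_mul_apply (contDiffAt_mul_apply hBH hH) hB) hG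
  exact contDiffAt_mul_apply (contDiffAt_mul_apply
    (contDiffAt_mul_apply hB hGinv) hBH) hH a b

end OrthogonalProjection

theorem Submodule.exists_mulVec_injective_range_eq {K n : Type*} [Field K] [Fintype n]
    (W : Submodule K (n → K)) :
    ∃ (r : ℕ) (B : Matrix n (Fin r) K),
      Function.Injective B.mulVec ∧ LinearMap.range B.mulVecLin = W := by
  let f := W.subtype ∘ₗ (Module.finBasis K W).equivFun.symm.toLinearMap
  have hB : (LinearMap.toMatrix' f).mulVecLin = f := by
    rw [← Matrix.toLin'_apply', Matrix.toLin'_toMatrix']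
  refine ⟨_, LinearMap.toMatrix' f, ?_, ?_⟩
  · rw [← Matrix.coe_mulVecLin, hB]
    exact W.injective_subtype.comp (Module.finBasis K W).equivFun.symm.injective
  · rw [hB, LinearMap.range_comp_of_range_eq_top _ (LinearEquiv.range _), Submodule.range_subtype]

theorem contDiffAt_proj_apply {E : Type*} [NormedAddCommGroup E] [NormedSpace ℝ E]
    {N : ℕ} {k : WithTop ℕ∞} {U : Set E} {t : E} (hU : U ∈ 𝓝 t)
    {h : E → Matrix (Fin N) (Fin N) ℂ} (hh : ∀ a b, ContDiffAt ℝ k (fun s => h s a b) t)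
    (hpos : ∀ s ∈ U, (h s).PosDef) {W : Submodule ℂ (Fin N → ℂ)}
    {π : E → (Fin N → ℂ) → (Fin N → ℂ)} (hπmem : ∀ s ∈ U, ∀ x, π s x ∈ W)
    (hπorth : ∀ s ∈ U, ∀ x, ∀ y ∈ W, sip (h s *ᵥ (x - π s x)) y = 0)
    {f : E → Fin N → ℂ} (hf : ∀ a, ContDiffAt ℝ k (fun s => f s a) t) (a : Fin N) :
    ContDiffAt ℝ k (fun s => π s (f s) a) t := by
  obtain ⟨r, B, hBinj, hBW⟩ := W.exists_mulVec_injective_range_eq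
  have hmem : ∀ y, y ∈ W ↔ ∃ c, B *ᵥ c = y := by simp [← hBW]
  have hG : ∀ s ∈ U, IsUnit (Bᴴ * h s * B).det := fun s hs =>
    (isUnit_iff_isUnit_det _).1 ((hpos s hs).conjTranspose_mul_mul_same hBinj).isUnit
  have hπ : ∀ s ∈ U, ∀ x, π s x = gramProj B (h s) *ᵥ x := by
    intro s hs x
    obtain ⟨c, hc⟩ := (hmem _).1 (hπmem s hs x)
    rw [← hc]
    refine eq_gramProj_mulVec (hG s hs) (conjTranspose_mulVec_eq_zero_of_sip fun d => ?_)
    rw [hc]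
    exact hπorth s hs x _ ((hmem _).2 ⟨d, rfl⟩)
  refine (contDiffAt_mulVec_apply (contDiffAt_gramProj_apply hh (hG t (mem_of_mem_nhds hU)))
    hf a).congr_of_eventuallyEq ?_
  filter_upwards [hU] with s hs
  rw [hπ s hs]

section ChernConnection

variable {m N : ℕ} {h : (Fin m → ℂ) → Matrix (Fin N) (Fin N) ℂ} {t : Fin m → ℂ}

theorem contDiffAt_chern_apply {n : WithTop ℕ∞} {u : (Fin m → ℂ) → Fin N → ℂ}
    (hh : ∀ a b, ContDiffAt ℝ (n + 1) (fun s => h s a b) t) (hdet : IsUnit (h t).det)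
    (hu : ∀ a, ContDiffAt ℝ (n + 1) (fun s => u s a) t) (j : Fin m) (a : Fin N) :
    ContDiffAt ℝ n (fun s => chern h u j s a) t := by
  have hinv := contDiffAt_inv_apply (fun a b => (hh a b).of_le le_self_add) hdet
  exact ((hu a).wD _).add (contDiffAt_mulVec_apply
    (contDiffAt_mul_apply hinv fun a b => (hh a b).wD _) (fun b => (hu b).of_le le_self_add) a)

theorem curv_mulVec_eq {u : (Fin m → ℂ) → Fin N → ℂ}
    (hh : ∀ a b, ContDiffAt ℝ 2 (fun s => h s a b) t) (hdet : IsUnit (h t).det)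
    (hu : ∀ a, ContDiffAt ℝ 2 (fun s => u s a) t) (j k : Fin m) :
    curv h j k t *ᵥ u t = chern h (fun s => vDbar u s k) j t - vDbar (chern h u j) t k := by
  set M := fun s => (h s)⁻¹ * mD h s j
  have hM : ∀ a b, DifferentiableAt ℝ (fun s => M s a b) t := fun a b =>
    (contDiffAt_mul_apply (contDiffAt_inv_apply (fun a b => (hh a b).of_le one_le_two) hdet)
      (fun a b => (hh a b).wD (n := 1) _) a b).differentiableAt one_ne_zero
  have hu' : ∀ a, DifferentiableAt ℝ (fun s => u s a) t := fun a =>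
    (hu a).differentiableAt two_ne_zero
  have hDu : ∀ a, DifferentiableAt ℝ (fun s => vD u s j a) t := fun a =>
    ((hu a).wD (n := 1) _).differentiableAt one_ne_zero
  have hsplit : vDbar (chern h u j) t k =
      vD (fun s => vDbar u s k) t j + (mDbar M t k *ᵥ u t + M t *ᵥ vDbar u t k) := by
    rw [show chern h u j = fun s => vD u s j + M s *ᵥ u s from rfl,
      vDbar_add hDu (differentiableAt_mulVec_apply hM hu'), vDbar_mulVec hM hu']
    congr 1
    exact funext fun a => wDbar_wD_comm (hu a) _ _
  rw [hsplit, chern, curv, neg_mulVec]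
  abel

theorem wDbar_sip_mulVec {A v : (Fin m → ℂ) → Fin N → ℂ}
    (hh : ∀ a b, DifferentiableAt ℝ (fun s => h s a b) t)
    (hherm : ∀ᶠ s in 𝓝 t, (h s).IsHermitian) (hdet : IsUnit (h t).det)
    (hA : ∀ a, DifferentiableAt ℝ (fun s => A s a) t)
    (hv : ∀ a, DifferentiableAt ℝ (fun s => v s a) t) (k : Fin m) :
    wDbar (fun s => sip (h s *ᵥ A s) (v s)) t (Pi.single k 1) =
      sip (h t *ᵥ A t) (chern h v k t) + sip (h t *ᵥ vDbar A t k) (v t) := by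
  rw [wDbar_sip (differentiableAt_mulVec_apply hh hA) hv, vDbar_mulVec hh hA, sip_add_left,
    chern, sip_add_right, sip_mulVec_inv_mul_mulVec hherm.self_of_nhds hdet,
    conjTranspose_mD hherm]
  ring

end ChernConnection

theorem griffiths_formula_at {m N : ℕ} {U : Set (Fin m → ℂ)} {t : Fin m → ℂ} (hU : U ∈ 𝓝 t)
    {h : (Fin m → ℂ) → Matrix (Fin N) (Fin N) ℂ}
    (hh : ∀ a b, ContDiffAt ℝ 2 (fun s => h s a b) t) (hpos : ∀ s ∈ U, (h s).PosDef)
    {W : Submodule ℂ (Fin N → ℂ)} {π : (Fin m → ℂ) → (Fin N → ℂ) → (Fin N → ℂ)}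
    (hπmem : ∀ s ∈ U, ∀ x, π s x ∈ W)
    (hπorth : ∀ s ∈ U, ∀ x, ∀ y ∈ W, sip (h s *ᵥ (x - π s x)) y = 0)
    {u v : (Fin m → ℂ) → (Fin N → ℂ)} (hu : ∀ a, ContDiffAt ℝ 2 (fun s => u s a) t)
    (hv : ∀ a, DifferentiableAt ℝ (fun s => v s a) t) (hvW : ∀ s ∈ U, v s ∈ W) (j k : Fin m) :
    sip (h t *ᵥ (curv h j k t *ᵥ u t)) (v t) =
      sip (h t *ᵥ (chern h u j t - π t (chern h u j t))) (chern h v k t - π t (chern h v k t))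
        + sip (h t *ᵥ (π t (chern h (fun s => vDbar u s k) j t)
            - vDbar (fun s => π s (chern h u j s)) t k)) (v t) := by
  have ht : t ∈ U := mem_of_mem_nhds hU
  have hdet : IsUnit (h t).det := (isUnit_iff_isUnit_det _).1 (hpos t ht).isUnit
  have hDu := contDiffAt_chern_apply (n := 1) hh hdet hu j
  set A := fun s => chern h u j s - π s (chern h u j s) with hA_def
  have hA : ∀ a, DifferentiableAt ℝ (fun s => A s a) t := fun a =>
    ((hDu a).sub (contDiffAt_proj_apply hU (fun a b => (hh a b).of_le one_le_two) hpos hπmem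
      hπorth hDu a)).differentiableAt one_ne_zero
  have hAv : (fun s => sip (h s *ᵥ A s) (v s)) =ᶠ[𝓝 t] fun _ => 0 := by
    filter_upwards [hU] with s hs using hπorth s hs _ _ (hvW s hs)
  have hsecond : sip (h t *ᵥ A t) (chern h v k t) + sip (h t *ᵥ vDbar A t k) (v t) = 0 := by
    rw [← wDbar_sip_mulVec (fun a b => (hh a b).differentiableAt two_ne_zero)
      (eventually_of_mem hU fun s hs => (hpos s hs).isHermitian) hdet hA hv, hAv.wDbar_eq,
      wDbar_const]
  have hπDu :
      vDbar (fun s => π s (chern h u j s)) t k = vDbar (chern h u j) t k - vDbar A t k := by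
    rw [← vDbar_sub (fun a => (hDu a).differentiableAt one_ne_zero) hA]
    simp only [hA_def, sub_sub_cancel]
  have hπv : ∀ x, sip (h t *ᵥ π t x) (v t) = sip (h t *ᵥ x) (v t) := fun x => by
    rw [eq_comm, ← sub_eq_zero, ← sip_sub_left, ← mulVec_sub]
    exact hπorth t ht x _ (hvW t ht)
  rw [show chern h u j t - π t (chern h u j t) = A t from rfl, curv_mulVec_eq hh hdet hu, hπDu,
    sip_sub_right, hπorth t ht _ _ (hπmem t ht _)]
  simp only [mulVec_sub, sip_sub_left, hπv]
  linear_combination -hsecond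

theorem stmt11_general {m N : ℕ}
    (U : Set (Fin m → ℂ)) (hU : IsOpen U)
    (h : (Fin m → ℂ) → Matrix (Fin N) (Fin N) ℂ)
    (hsm : ∀ a b, ContDiffOn ℝ (⊤ : ℕ∞) (fun t => h t a b) U)
    (hpos : ∀ t ∈ U, (h t).PosDef)
    (W : Submodule ℂ (Fin N → ℂ))
    (π : (Fin m → ℂ) → (Fin N → ℂ) → (Fin N → ℂ))
    (hπmem : ∀ t ∈ U, ∀ x, π t x ∈ W)
    (hπorth : ∀ t ∈ U, ∀ x, ∀ y ∈ W, sip (h t *ᵥ (x - π t x)) y = 0)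
    (u v : (Fin m → ℂ) → (Fin N → ℂ))
    (husm : ∀ a, ContDiffOn ℝ (⊤ : ℕ∞) (fun t => u t a) U)
    (hvsm : ∀ a, ContDiffOn ℝ (⊤ : ℕ∞) (fun t => v t a) U)
    (hvW : ∀ t ∈ U, v t ∈ W) :
    ∀ j k : Fin m, ∀ t ∈ U,
      sip (h t *ᵥ (curv h j k t *ᵥ u t)) (v t) =
        sip (h t *ᵥ (chern h u j t - π t (chern h u j t)))
            (chern h v k t - π t (chern h v k t))
          + sip (h t *ᵥ
              (π t (chern h (fun s => vDbar u s k) j t)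
                - vDbar (fun s => π s (chern h u j s)) t k)) (v t) := by
  intro j k t ht
  have hUt : U ∈ 𝓝 t := hU.mem_nhds ht
  have hC2 {f : (Fin m → ℂ) → ℂ} (hf : ContDiffOn ℝ (⊤ : ℕ∞) f U) : ContDiffAt ℝ 2 f t :=
    (hf.contDiffAt hUt).of_le ENat.LEInfty.out
  exact griffiths_formula_at hUt (fun a b => hC2 (hsm a b)) hpos hπmem hπorth
    (fun a => hC2 (husm a)) (fun a => (hC2 (hvsm a)).differentiableAt two_ne_zero) hvW j k

/-- **Griffiths' formula (2.4) for the curvature of a subbundle (Section 2):** if `π(t)` is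
the `h(t)`-orthogonal projection onto the subspace `W` and `E = U×W` carries the induced
metric, with `D^E_j u = π·(D_j u)` and `Θ^E_{jk}u = D^E_j(∂̄_k u) − ∂̄_k(D^E_j u)`, then for
smooth sections `u, v` of `E`,
`⟪h·Θ_{jk}·u, v⟫ = ⟪h·π_⊥(D_j u), π_⊥(D_k v)⟫ + ⟪h·Θ^E_{jk}u, v⟫` on `U`. -/
theorem stmt11 {m N : ℕ}
    (U : Set (Fin m → ℂ)) (hU : IsOpen U)
    (h : (Fin m → ℂ) → Matrix (Fin N) (Fin N) ℂ)
    (hsm : ∀ a b, ContDiffOn ℝ (⊤ : ℕ∞) (fun t => h t a b) U)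
    (hpos : ∀ t ∈ U, (h t).PosDef)
    (W : Submodule ℂ (Fin N → ℂ))
    (π : (Fin m → ℂ) → (Fin N → ℂ) → (Fin N → ℂ))
    (hπmem : ∀ t ∈ U, ∀ x, π t x ∈ W)
    (hπorth : ∀ t ∈ U, ∀ x, ∀ y ∈ W, sip (h t *ᵥ (x - π t x)) y = 0)
    (u v : (Fin m → ℂ) → (Fin N → ℂ))
    (husm : ∀ a, ContDiffOn ℝ (⊤ : ℕ∞) (fun t => u t a) U)
    (hvsm : ∀ a, ContDiffOn ℝ (⊤ : ℕ∞) (fun t => v t a) U)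
    (huW : ∀ t ∈ U, u t ∈ W) (hvW : ∀ t ∈ U, v t ∈ W) :
    ∀ j k : Fin m, ∀ t ∈ U,
      sip (h t *ᵥ (curv h j k t *ᵥ u t)) (v t) =
        sip (h t *ᵥ (chern h u j t - π t (chern h u j t)))
            (chern h v k t - π t (chern h v k t))
          + sip (h t *ᵥ
              (π t (chern h (fun s => vDbar u s k) j t)
                - vDbar (fun s => π s (chern h u j s)) t k)) (v t) :=
  stmt11_general U hU h hsm hpos W π hπmem hπorth u v husm hvsm hvW
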